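/- Let X and Y be random variables on a probability space (Ω, μ) (μ a probability measure) taking values in finite types 𝒳 and 𝒴, let 𝓜 be a finite type, let φ : 𝒳 × 𝒴 → 𝓜, and set M = φ(X, Y). If there exist maps ψ₁ : 𝓜 × 𝒳 → 𝒴 and ψ₂ : 𝓜 × 𝒴 → 𝒳 such that ψ₁(M, X) = Y almost surely and ψ₂(M, Y) = X almost surely, then H[M] ≥ max(H[Y | X], H[X | Y]). -/

import Mathlib

/-!
Since `ψ₁ (M, X) = Y` almost surely, `(X, Y)` is a function of `(M, X)`, so
`H[X, Y] ≤ H[M, X] ≤ H[M] + H[X]` by monotonicity of entropy under maps and subadditivity,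
i.e. `H[Y | X] ≤ H[M]`; symmetrically `H[X | Y] ≤ H[M]` using `ψ₂`.
-/

open MeasureTheory

/-- Shannon entropy of a random variable taking values in a finite type. -/
noncomputable def ent {Ω : Type*} [MeasurableSpace Ω] (μ : Measure Ω)
    {α : Type*} [Fintype α] (X : Ω → α) : ℝ :=
  ∑ a : α, Real.negMulLog ((μ (X ⁻¹' {a})).toReal)

/-- `condEnt μ X Y` is the conditional Shannon entropy `H[Y | X]`. -/
noncomputable def condEnt {Ω : Type*} [MeasurableSpace Ω] (μ : Measure Ω)
    {α β : Type*} [Fintype α] [Fintype β] (X : Ω → α) (Y : Ω → β) : ℝ :=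
  ent μ (fun ω => (X ω, Y ω)) - ent μ X

namespace Real

theorem negMulLog_sum_le_sum_negMulLog {ι : Type*} (s : Finset ι) {f : ι → ℝ}
    (hf : ∀ i ∈ s, 0 ≤ f i) :
    negMulLog (∑ i ∈ s, f i) ≤ ∑ i ∈ s, negMulLog (f i) := by
  rw [negMulLog, neg_mul, Finset.sum_mul, ← Finset.sum_neg_distrib]
  refine Finset.sum_le_sum fun i hi => ?_
  rcases (hf i hi).eq_or_lt with h0 | hpos
  · simp [← h0]
  · rw [negMulLog, neg_mul, neg_le_neg_iff]
    exact mul_le_mul_of_nonneg_left (log_le_log hpos (Finset.single_le_sum hf hi)) hpos.le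

/-- Gibbs' inequality for a single term: `log (q / p) ≤ q / p - 1`, multiplied by `p`. -/
theorem negMulLog_le_neg_mul_log_add_sub {p q : ℝ} (hp : 0 ≤ p) (hq : 0 ≤ q)
    (hpq : 0 < p → 0 < q) : negMulLog p ≤ -(p * log q) + (q - p) := by
  rcases hp.eq_or_lt with rfl | hp
  · simpa using hq
  have hq := hpq hp
  have hlog := mul_le_mul_of_nonneg_left (log_le_sub_one_of_pos (div_pos hq hp)) hp.le
  rw [log_div hq.ne' hp.ne', mul_sub, mul_sub, mul_div_cancel₀ _ hp.ne'] at hlog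
  rw [negMulLog]
  linarith

/-- Subadditivity of entropy for a finite subprobability vector: compare `p` with the product
of its marginals by Gibbs' inequality; the slack `(∑ p) ^ 2 - ∑ p` is nonpositive. -/
theorem sum_negMulLog_le_sum_negMulLog_marginals {α β : Type*} [Fintype α] [Fintype β]
    (p : α × β → ℝ) (hp : ∀ c, 0 ≤ p c) (hp_sum : ∑ c, p c ≤ 1) :
    ∑ c, negMulLog (p c) ≤
      ∑ a, negMulLog (∑ b, p (a, b)) + ∑ b, negMulLog (∑ a, p (a, b)) := by
  set pA := fun a => ∑ b, p (a, b)
  set pB := fun b => ∑ a, p (a, b)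
  have pointwise : ∀ c, negMulLog (p c) ≤
      -(p c * log (pA c.1)) + -(p c * log (pB c.2)) + (pA c.1 * pB c.2 - p c) := by
    intro c
    rcases (hp c).eq_or_lt with h0 | hpos
    · rw [← h0]
      simpa using mul_nonneg (Finset.sum_nonneg fun b _ => hp (c.1, b))
        (Finset.sum_nonneg fun a _ => hp (a, c.2))
    have hpA : 0 < pA c.1 :=
      hpos.trans_le (Finset.single_le_sum (fun b _ => hp (c.1, b)) (Finset.mem_univ c.2))
    have hpB : 0 < pB c.2 :=
      hpos.trans_le (Finset.single_le_sum (fun a _ => hp (a, c.2)) (Finset.mem_univ c.1))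
    have := negMulLog_le_neg_mul_log_add_sub (hp c) (mul_pos hpA hpB).le fun _ => mul_pos hpA hpB
    rwa [log_mul hpA.ne' hpB.ne', mul_add, neg_add] at this
  have hsumA : ∑ c : α × β, -(p c * log (pA c.1)) = ∑ a, negMulLog (pA a) := by
    rw [Fintype.sum_prod_type]
    simp only [negMulLog, pA, neg_mul, Finset.sum_mul, Finset.sum_neg_distrib]
  have hsumB : ∑ c : α × β, -(p c * log (pB c.2)) = ∑ b, negMulLog (pB b) := by
    rw [Fintype.sum_prod_type_right]
    simp only [negMulLog, pB, neg_mul, Finset.sum_mul, Finset.sum_neg_distrib]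
  have hsumAB : ∑ c : α × β, pA c.1 * pB c.2 = (∑ c, p c) ^ 2 := by
    rw [Fintype.sum_prod_type, ← Finset.sum_mul_sum, sq]
    congr 1
    · exact Fintype.sum_prod_type p |>.symm
    · exact Fintype.sum_prod_type_right p |>.symm
  calc ∑ c, negMulLog (p c)
      ≤ ∑ c, (-(p c * log (pA c.1)) + -(p c * log (pB c.2)) + (pA c.1 * pB c.2 - p c)) :=
        Finset.sum_le_sum fun c _ => pointwise c
    _ = ∑ a, negMulLog (pA a) + ∑ b, negMulLog (pB b) + ((∑ c, p c) ^ 2 - ∑ c, p c) := by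
        rw [Finset.sum_add_distrib, Finset.sum_add_distrib, Finset.sum_sub_distrib, hsumA, hsumB,
          hsumAB]
    _ ≤ ∑ a, negMulLog (pA a) + ∑ b, negMulLog (pB b) := by
        nlinarith [Finset.sum_nonneg fun c (_ : c ∈ Finset.univ) => hp c]

end Real

section Entropy

variable {Ω : Type*} [MeasurableSpace Ω] (μ : Measure Ω) {α β : Type*} [Fintype α]

theorem ent_congr_ae {Z W : Ω → α} (h : Z =ᵐ[μ] W) : ent μ Z = ent μ W :=
  Finset.sum_congr rfl fun a _ => by rw [measure_congr (h.preimage {a})]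

theorem measureReal_comp_preimage_singleton [IsFiniteMeasure μ] [DecidableEq β] {Z : Ω → α}
    (hZ : ∀ a, MeasurableSet (Z ⁻¹' {a})) (g : α → β) (b : β) :
    μ.real ((g ∘ Z) ⁻¹' {b}) = ∑ a with g a = b, μ.real (Z ⁻¹' {a}) := by
  rw [sum_measureReal_preimage_singleton _ fun a _ => hZ a]
  congr 1
  ext
  simp

theorem ent_comp_le [Fintype β] [IsFiniteMeasure μ] {Z : Ω → α}
    (hZ : ∀ a, MeasurableSet (Z ⁻¹' {a})) (g : α → β) : ent μ (g ∘ Z) ≤ ent μ Z := by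
  classical
  calc ent μ (g ∘ Z)
      = ∑ b, Real.negMulLog (∑ a with g a = b, μ.real (Z ⁻¹' {a})) :=
        Finset.sum_congr rfl fun b _ => congrArg _ (measureReal_comp_preimage_singleton μ hZ g b)
    _ ≤ ∑ b, ∑ a with g a = b, Real.negMulLog (μ.real (Z ⁻¹' {a})) :=
        Finset.sum_le_sum fun b _ =>
          Real.negMulLog_sum_le_sum_negMulLog _ fun _ _ => measureReal_nonneg
    _ = ent μ Z := Finset.sum_fiberwise _ _ _

theorem ent_pair_le [Fintype β] [IsZeroOrProbabilityMeasure μ] {A : Ω → α} {B : Ω → β}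
    (hAB : ∀ c, MeasurableSet ((fun ω => (A ω, B ω)) ⁻¹' {c})) :
    ent μ (fun ω => (A ω, B ω)) ≤ ent μ A + ent μ B := by
  classical
  have marginal_fst : ∀ a, μ.real (A ⁻¹' {a}) =
      ∑ b, μ.real ((fun ω => (A ω, B ω)) ⁻¹' {(a, b)}) := by
    intro a
    have : A ⁻¹' {a} = (fun ω => (A ω, B ω)) ⁻¹' ↑({a} ×ˢ (Finset.univ : Finset β)) := by
      ext; simp [eq_comm]
    rw [this, ← sum_measureReal_preimage_singleton _ fun c _ => hAB c, Finset.sum_product,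
      Finset.sum_singleton]
  have marginal_snd : ∀ b, μ.real (B ⁻¹' {b}) =
      ∑ a, μ.real ((fun ω => (A ω, B ω)) ⁻¹' {(a, b)}) := by
    intro b
    have : B ⁻¹' {b} = (fun ω => (A ω, B ω)) ⁻¹' ↑((Finset.univ : Finset α) ×ˢ {b}) := by
      ext; simp [eq_comm]
    rw [this, ← sum_measureReal_preimage_singleton _ fun c _ => hAB c, Finset.sum_product_right,
      Finset.sum_singleton]
  have total : ∑ c, μ.real ((fun ω => (A ω, B ω)) ⁻¹' {c}) ≤ 1 := by
    rw [sum_measureReal_preimage_singleton _ fun c _ => hAB c]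
    exact measureReal_le_one
  have := Real.sum_negMulLog_le_sum_negMulLog_marginals _ (fun _ => measureReal_nonneg) total
  simp only [← marginal_fst, ← marginal_snd] at this
  exact this

theorem condEnt_le_ent_of_ae_eq_comp [Fintype β] [IsZeroOrProbabilityMeasure μ]
    {γ : Type*} [Fintype γ] {Z : Ω → γ} {X : Ω → α} {Y : Ω → β}
    (hZX : ∀ c, MeasurableSet ((fun ω => (Z ω, X ω)) ⁻¹' {c})) (ψ : γ × α → β)
    (hψ : ∀ᵐ ω ∂μ, ψ (Z ω, X ω) = Y ω) : condEnt μ X Y ≤ ent μ Z := by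
  have hdecode : ent μ (fun ω => (X ω, Y ω)) =
      ent μ ((fun c => (c.2, ψ c)) ∘ fun ω => (Z ω, X ω)) :=
    ent_congr_ae μ (by filter_upwards [hψ] with ω hω; simp [hω])
  have hcomp := ent_comp_le μ hZX (fun c => (c.2, ψ c))
  have hpair := ent_pair_le μ hZX
  rw [condEnt]
  linarith

end Entropy

/-- Cut-set converse for the complementary delivery problem: if decoder 1 can
recover `Y` from `(M, X)` and decoder 2 can recover `X` from `(M, Y)` almost
surely, where `M = φ(X, Y)`, then `H[M] ≥ max(H[Y | X], H[X | Y])`. -/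
theorem complementary_delivery_converse
    {Ω : Type*} [MeasurableSpace Ω] (μ : Measure Ω) [IsProbabilityMeasure μ]
    {𝒳 𝒴 𝓜 : Type*} [Fintype 𝒳] [Fintype 𝒴] [Fintype 𝓜]
    [MeasurableSpace 𝒳] [MeasurableSingletonClass 𝒳]
    [MeasurableSpace 𝒴] [MeasurableSingletonClass 𝒴]
    (X : Ω → 𝒳) (Y : Ω → 𝒴) (hX : Measurable X) (hY : Measurable Y)
    (φ : 𝒳 × 𝒴 → 𝓜)
    (hdec1 : ∃ ψ₁ : 𝓜 × 𝒳 → 𝒴, ∀ᵐ ω ∂μ, ψ₁ (φ (X ω, Y ω), X ω) = Y ω)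
    (hdec2 : ∃ ψ₂ : 𝓜 × 𝒴 → 𝒳, ∀ᵐ ω ∂μ, ψ₂ (φ (X ω, Y ω), Y ω) = X ω) :
    ent μ (fun ω => φ (X ω, Y ω)) ≥ max (condEnt μ X Y) (condEnt μ Y X) := by
  obtain ⟨ψ₁, h₁⟩ := hdec1
  obtain ⟨ψ₂, h₂⟩ := hdec2
  have hXY := hX.prodMk hY
  exact max_le
    (condEnt_le_ent_of_ae_eq_comp μ (fun c => @hXY {p | (φ p, p.1) = c} .of_discrete) ψ₁ h₁)
    (condEnt_le_ent_of_ae_eq_comp μ (fun c => @hXY {p | (φ p, p.2) = c} .of_discrete) ψ₂ h₂)
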